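/- Let M be a topological abelian monoid with the cancellation property. Suppose that the naive group completion M⁺ is a topological group and that the subgroup 2M⁺ = { x + x : x ∈ M⁺ } is closed in M⁺. Then the canonical map M/2M → M⁺/2M⁺, sending the class of m to the class of q(m, 0), is an isomorphism of topological abelian groups, where 2M = { m + m : m ∈ M } ⊆ M, the quotient monoid M/2M carries the quotient topology (and is a group, since every element is its own inverse), and M⁺/2M⁺ is the quotient topological group. -/

import Mathlib

universe u

/-- The generating relation for the naive group completion of a topological abelian monoid:
`(a, b) ∼ (m + a, m + b)` for all `m`. -/
def gcRel (M : Type u) [AddCommMonoid M] : M × M → M × M → Prop :=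
  fun p q => ∃ m : M, q.1 = m + p.1 ∧ q.2 = m + p.2

/-- The naive group completion `M⁺` of an abelian monoid `M`: the quotient of `M × M` by the
equivalence relation generated by the diagonal translation action of `M`. -/
def GC (M : Type u) [AddCommMonoid M] : Type u := Quot (gcRel M)

namespace GC

variable {M : Type u} [AddCommMonoid M]

/-- `q(a, b)`, the class of `(a, b)` in the naive group completion. -/
def mk (p : M × M) : GC M := Quot.mk _ p

instance [TopologicalSpace M] : TopologicalSpace (GC M) :=
  inferInstanceAs (TopologicalSpace (Quot (gcRel M)))

protected def add : GC M → GC M → GC M :=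
  Quot.map₂ (fun p q => (p.1 + q.1, p.2 + q.2))
    (fun p q q' h => by
      obtain ⟨m, h1, h2⟩ := h
      refine ⟨m, ?_, ?_⟩
      · show p.1 + q'.1 = m + (p.1 + q.1)
        rw [h1]; exact add_left_comm _ _ _
      · show p.2 + q'.2 = m + (p.2 + q.2)
        rw [h2]; exact add_left_comm _ _ _)
    (fun p p' q h => by
      obtain ⟨m, h1, h2⟩ := h
      refine ⟨m, ?_, ?_⟩
      · show p'.1 + q.1 = m + (p.1 + q.1)
        rw [h1]; exact add_assoc _ _ _
      · show p'.2 + q.2 = m + (p.2 + q.2)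
        rw [h2]; exact add_assoc _ _ _)

protected def neg : GC M → GC M :=
  Quot.map (fun p => (p.2, p.1)) (fun _ _ h => by
    obtain ⟨m, h1, h2⟩ := h
    exact ⟨m, h2, h1⟩)

instance : Zero (GC M) := ⟨GC.mk (0, 0)⟩
instance : Add (GC M) := ⟨GC.add⟩
instance : Neg (GC M) := ⟨GC.neg⟩

instance : AddCommGroup (GC M) where
  add := (· + ·)
  zero := 0
  neg := (- ·)
  add_assoc := by
    rintro ⟨p⟩ ⟨q⟩ ⟨s⟩
    exact congrArg (Quot.mk _) (by simp [add_assoc])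
  zero_add := by
    rintro ⟨p⟩
    exact congrArg (Quot.mk _) (by simp)
  add_zero := by
    rintro ⟨p⟩
    exact congrArg (Quot.mk _) (by simp)
  add_comm := by
    rintro ⟨p⟩ ⟨q⟩
    exact congrArg (Quot.mk _) (by simp [add_comm])
  neg_add_cancel := by
    rintro ⟨p⟩
    exact (Quot.sound ⟨p.2 + p.1, (add_zero _).symm, by rw [add_zero, add_comm]⟩).symm
  nsmul := nsmulRec
  nsmul_zero := fun _ => rfl
  nsmul_succ := fun _ _ => rfl
  zsmul := zsmulRec
  zsmul_zero' := fun _ => rfl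
  zsmul_succ' := fun _ _ => rfl
  zsmul_neg' := fun _ _ => rfl

@[simp] theorem mk_add (p q : M × M) : mk p + mk q = mk (p.1 + q.1, p.2 + q.2) := rfl

@[simp] theorem mk_neg (p : M × M) : -(mk p) = mk (p.2, p.1) := rfl

/-- The map on the naive group completion induced by a monoid endomorphism. -/
def map (σ : M →+ M) : GC M → GC M :=
  Quot.map (fun p => (σ p.1, σ p.2)) (fun p q h => by
    obtain ⟨m, h1, h2⟩ := h
    refine ⟨σ m, ?_, ?_⟩
    · show σ q.1 = σ m + σ p.1
      rw [h1, map_add]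
    · show σ q.2 = σ m + σ p.2
      rw [h2, map_add])

@[simp] theorem map_mk (σ : M →+ M) (p : M × M) : map σ (mk p) = mk (σ p.1, σ p.2) := rfl

theorem map_add' (σ : M →+ M) (x y : GC M) : map σ (x + y) = map σ x + map σ y := by
  rcases x with ⟨p⟩; rcases y with ⟨q⟩
  exact congrArg (Quot.mk _) (by simp)

theorem map_zero' (σ : M →+ M) : map σ (0 : GC M) = 0 :=
  congrArg (Quot.mk _) (by simp)

theorem map_neg' (σ : M →+ M) (x : GC M) : map σ (-x) = -(map σ x) := by
  rcases x with ⟨p⟩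
  rfl

end GC

/-- The congruence relation on `M` induced by a submonoid `N`: `a ∼ b` iff there are
`n, n' ∈ N` with `a + n = b + n'`; the quotient is the quotient monoid `M/N`. -/
def modCon {M : Type u} [AddCommMonoid M] (N : AddSubmonoid M) : AddCon M where
  r a b := ∃ n ∈ N, ∃ n' ∈ N, a + n = b + n'
  iseqv :=
    { refl := fun _ => ⟨0, N.zero_mem, 0, N.zero_mem, rfl⟩
      symm := fun h => by
        obtain ⟨n, hn, n', hn', h⟩ := h
        exact ⟨n', hn', n, hn, h.symm⟩
      trans := fun h h' => by
        obtain ⟨n, hn, n', hn', h1⟩ := h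
        obtain ⟨m, hm, m', hm', h2⟩ := h'
        refine ⟨n + m, N.add_mem hn hm, m' + n', N.add_mem hm' hn', ?_⟩
        rw [← add_assoc, h1, add_right_comm, h2, add_assoc] }
  add' := fun h h' => by
    obtain ⟨n, hn, n', hn', h1⟩ := h
    obtain ⟨m, hm, m', hm', h2⟩ := h'
    exact ⟨n + m, N.add_mem hn hm, n' + m', N.add_mem hn' hm', by
      rw [add_add_add_comm, h1, h2, add_add_add_comm]⟩

instance modConTop {M : Type u} [AddCommMonoid M] [TopologicalSpace M] (N : AddSubmonoid M) :
    TopologicalSpace (modCon N).Quotient :=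
  inferInstanceAs (TopologicalSpace (Quotient (modCon N).toSetoid))

/-- The canonical quotient map `M → M/N`. -/
def modMk {M : Type u} [AddCommMonoid M] (N : AddSubmonoid M) (a : M) : (modCon N).Quotient :=
  Quotient.mk _ a

/-- The submonoid `2M = { m + m : m ∈ M }`. -/
def twoSubmonoid (M : Type u) [AddCommMonoid M] : AddSubmonoid M where
  carrier := { x | ∃ m, x = m + m }
  zero_mem' := ⟨0, (add_zero 0).symm⟩
  add_mem' := by
    rintro a b ⟨m, rfl⟩ ⟨n, rfl⟩
    exact ⟨m + n, add_add_add_comm m m n n⟩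

/-- The subgroup `2M⁺ = { x + x : x ∈ M⁺ }` of the naive group completion. -/
def twoGCSubgroup (M : Type u) [AddCommMonoid M] : AddSubgroup (GC M) where
  carrier := { y | ∃ x, y = x + x }
  zero_mem' := ⟨0, (add_zero 0).symm⟩
  add_mem' := by
    rintro a b ⟨x, rfl⟩ ⟨y, rfl⟩
    exact ⟨x + y, add_add_add_comm x x y y⟩
  neg_mem' := by
    rintro a ⟨x, rfl⟩
    exact ⟨-x, by rw [neg_add]⟩

/-! The inverse of `[m] ↦ [q(m, 0)]` is `[q(a, b)] ↦ [a + b]`: in `M/2M` every element is its own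
negative, so `[a + b] = [a] - [b]`, and this kills `2M⁺`. Both maps are continuous because `M/2M`,
`M⁺` and `M⁺/2M⁺` carry quotient topologies and `(a, b) ↦ [a + b]` is continuous on `M × M`. -/

open Topology

namespace GC

variable {M : Type u} [AddCommMonoid M]

theorem mk_surjective : Function.Surjective (mk : M × M → GC M) :=
  Quot.exists_rep

theorem isQuotientMap_mk [TopologicalSpace M] : IsQuotientMap (mk : M × M → GC M) :=
  isQuotientMap_quot_mk

def of : M →+ GC M where
  toFun m := mk (m, 0)
  map_zero' := rfl
  map_add' _ _ := congrArg mk (Prod.ext rfl (add_zero 0).symm)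

theorem mk_eq_of_sub_of (p : M × M) : mk p = of p.1 - of p.2 := by
  show mk p = mk (p.1 + 0, 0 + p.2)
  rw [add_zero, zero_add]

theorem continuous_of [TopologicalSpace M] : Continuous (of : M → GC M) :=
  continuous_quot_mk.comp (continuous_id.prodMk continuous_const)

end GC

section QuotientMonoid

variable {M : Type u} [AddCommMonoid M]

theorem modMk_add (N : AddSubmonoid M) (a b : M) :
    modMk N (a + b) = modMk N a + modMk N b :=
  rfl

theorem modMk_add_of_mem {N : AddSubmonoid M} {n : M} (hn : n ∈ N) (a : M) :
    modMk N (a + n) = modMk N a :=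
  Quotient.sound ⟨0, N.zero_mem, n, hn, add_zero _⟩

theorem modCon_le_ker {G : Type*} [AddCommGroup G] {N : AddSubmonoid M} {H : AddSubgroup G}
    (f : M →+ G) (hf : ∀ n ∈ N, f n ∈ H) :
    modCon N ≤ AddCon.ker ((QuotientAddGroup.mk' H).comp f) := by
  rintro a b ⟨n, hn, n', hn', h⟩
  rw [AddCon.ker_rel, AddMonoidHom.comp_apply, AddMonoidHom.comp_apply,
    QuotientAddGroup.mk'_apply, QuotientAddGroup.mk'_apply, QuotientAddGroup.eq]
  have hab : -f a + f b = f n - f n' := by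
    rw [neg_add_eq_sub, sub_eq_sub_iff_add_eq_add, ← map_add, ← map_add, ← h, add_comm n]
  rw [hab]
  exact H.sub_mem (hf n hn) (hf n' hn')

theorem isQuotientMap_modMk [TopologicalSpace M] (N : AddSubmonoid M) :
    IsQuotientMap (modMk N : M → (modCon N).Quotient) :=
  isQuotientMap_quot_mk

end QuotientMonoid

section ModTwo

variable {M : Type u} [AddCommMonoid M]

theorem add_self_mem_twoSubmonoid (m : M) : m + m ∈ twoSubmonoid M :=
  ⟨m, rfl⟩

theorem modMk_two_add_self (a : M) : modMk (twoSubmonoid M) (a + a) = 0 := by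
  rw [← zero_add (a + a), modMk_add_of_mem (add_self_mem_twoSubmonoid a)]
  rfl

def modTwoToQuotient :
    (modCon (twoSubmonoid M)).Quotient →+ GC M ⧸ twoGCSubgroup M :=
  (modCon (twoSubmonoid M)).lift ((QuotientAddGroup.mk' _).comp GC.of)
    (modCon_le_ker GC.of (by rintro _ ⟨m, rfl⟩; exact ⟨GC.of m, map_add _ _ _⟩))

def GC.toModTwo : GC M →+ (modCon (twoSubmonoid M)).Quotient where
  toFun := Quot.lift (fun p => modMk (twoSubmonoid M) (p.1 + p.2)) <| by
    rintro p ⟨_, _⟩ ⟨m, h₁, h₂⟩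
    obtain rfl : _ = m + p.1 := h₁
    obtain rfl : _ = m + p.2 := h₂
    rw [add_add_add_comm, add_comm (m + m), modMk_add_of_mem (add_self_mem_twoSubmonoid m)]
  map_zero' := congrArg _ (add_zero 0)
  map_add' := by
    rintro ⟨p⟩ ⟨q⟩
    exact congrArg _ (add_add_add_comm _ _ _ _)

theorem GC.toModTwo_mk (p : M × M) : GC.toModTwo (GC.mk p) = modMk _ (p.1 + p.2) :=
  rfl

theorem twoGCSubgroup_le_ker_toModTwo : twoGCSubgroup M ≤ (GC.toModTwo (M := M)).ker := by
  rintro _ ⟨z, rfl⟩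
  obtain ⟨p, rfl⟩ := GC.mk_surjective z
  rw [AddMonoidHom.mem_ker, map_add, GC.toModTwo_mk, ← modMk_add, modMk_two_add_self]

def quotientToModTwo : GC M ⧸ twoGCSubgroup M →+ (modCon (twoSubmonoid M)).Quotient :=
  QuotientAddGroup.lift _ GC.toModTwo twoGCSubgroup_le_ker_toModTwo

theorem quotientToModTwo_modTwoToQuotient (x : (modCon (twoSubmonoid M)).Quotient) :
    quotientToModTwo (modTwoToQuotient x) = x := by
  induction x using Quotient.ind with | _ m => ?_
  exact congrArg (modMk _) (add_zero m)

theorem modTwoToQuotient_quotientToModTwo (y : GC M ⧸ twoGCSubgroup M) :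
    modTwoToQuotient (quotientToModTwo y) = y := by
  induction y using QuotientAddGroup.induction_on with | _ z => ?_
  obtain ⟨p, rfl⟩ := GC.mk_surjective z
  refine QuotientAddGroup.eq.mpr ⟨-GC.of p.2, ?_⟩
  show -GC.of (p.1 + p.2) + GC.mk p = _
  rw [GC.mk_eq_of_sub_of, map_add]
  abel

variable [TopologicalSpace M]

theorem continuous_modTwoToQuotient : Continuous (modTwoToQuotient (M := M)) :=
  (isQuotientMap_modMk _).continuous_iff.mpr <|
    continuous_quot_mk.comp GC.continuous_of

theorem continuous_quotientToModTwo [ContinuousAdd M] :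
    Continuous (quotientToModTwo (M := M)) :=
  (QuotientAddGroup.isQuotientMap_mk _ |>.comp GC.isQuotientMap_mk).continuous_iff.mpr <|
    (isQuotientMap_modMk _).continuous.comp continuous_add

def modTwoHomeomorph [ContinuousAdd M] :
    (modCon (twoSubmonoid M)).Quotient ≃ₜ GC M ⧸ twoGCSubgroup M where
  toFun := modTwoToQuotient
  invFun := quotientToModTwo
  left_inv := quotientToModTwo_modTwoToQuotient
  right_inv := modTwoToQuotient_quotientToModTwo
  continuous_toFun := continuous_modTwoToQuotient
  continuous_invFun := continuous_quotientToModTwo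

end ModTwo

theorem mod_two_iso_general
    {M : Type u} [AddCancelCommMonoid M] [TopologicalSpace M] [ContinuousAdd M] :
    ∃ e : (modCon (twoSubmonoid M)).Quotient ≃ₜ GC M ⧸ twoGCSubgroup M,
      (∀ x y, e (x + y) = e x + e y) ∧
      ∀ m : M, e (modMk (twoSubmonoid M) m) = QuotientAddGroup.mk (GC.mk (m, 0)) :=
  ⟨modTwoHomeomorph, map_add modTwoToQuotient, fun _ => rfl⟩

/-- Let `M` be a topological abelian monoid with the cancellation property
such that the naive group completion `M⁺` is a topological group and the subgroup
`2M⁺ = { x + x : x ∈ M⁺ }` is closed.  Then the canonical map `M/2M → M⁺/2M⁺`, sending the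
class of `m` to the class of `q(m, 0)`, is an isomorphism of topological abelian groups. -/
theorem mod_two_iso
    {M : Type u} [AddCancelCommMonoid M] [TopologicalSpace M] [ContinuousAdd M]
    (hMplus : IsTopologicalAddGroup (GC M))
    (h2cl : IsClosed ((twoGCSubgroup M : AddSubgroup (GC M)) : Set (GC M))) :
    ∃ e : (modCon (twoSubmonoid M)).Quotient ≃ₜ GC M ⧸ twoGCSubgroup M,
      (∀ x y, e (x + y) = e x + e y) ∧
      ∀ m : M, e (modMk (twoSubmonoid M) m) = QuotientAddGroup.mk (GC.mk (m, 0)) :=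
  mod_two_iso_general
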